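/- Assume (EA). For all r, k, s ∈ ℕ: 𝒫_qsym^{r+k+s} ∘ (I_r ⊗ 𝒫_qsym^k ⊗ I_s) = 𝒫_qsym^{r+k+s}, where 𝒫_qsym^m denotes the restriction of 𝒫_qsym to T^m and I_r ⊗ 𝒫_qsym^k ⊗ I_s is the operator on T^{r+k+s} = T^r ⊗ T^k ⊗ T^s applying 𝒫_qsym^k to the middle tensor factor and the identity to the outer factors. -/

import Mathlib

/- Setting (common to all statements):
`V` is the complex vector space with basis `X_1, …, X_N`, `T = T(V)` the tensor algebra,
realized concretely as the algebra of the free monoid of words in the letters `Fin N`;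
the homogeneous component `T^n` is the span of the words of length `n`.
For `j < i` we are given nonzero scalars `b i j` and elements `p i j` in the span of the
`X_k ⊗ X_l` with `k, l ≤ i - 1`; `I_R` is the two-sided ideal generated by the elements
`X_i ⊗ X_j − b_{ij} X_j ⊗ X_i − p_{ij}`, and `𝒜 = T/I_R`. -/

open scoped BigOperators

noncomputable section

namespace QDiff

/-- Words in the letters `X_1, …, X_N` (indexed by `Fin N`). -/
abbrev Word (N : ℕ) := FreeMonoid (Fin N)

/-- The tensor algebra `T(V)` over the `N`-dimensional space `V` with basis `X_1,…,X_N`,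
realized concretely as the monoid algebra on words. -/
abbrev T (N : ℕ) := MonoidAlgebra ℂ (Word N)

variable {N : ℕ}

/-- The basis vector `X_i` of `V ⊆ T(V)`. -/
def X (i : Fin N) : T N := MonoidAlgebra.single (FreeMonoid.of i) 1

/-- The monomial of `T(V)` associated to a word. -/
def mono (w : Word N) : T N := MonoidAlgebra.single w 1

/-- Length (tensor degree) of a word. -/
def wlen (w : Word N) : ℕ := (FreeMonoid.toList w).length

/-- `cnt w k`: the number of occurrences of the letter `X_k` in the word `w`;
so `fun k => cnt w k` is `ℓ(w)`. -/
def cnt (w : Word N) (k : Fin N) : ℕ := (FreeMonoid.toList w).count k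

/-- `w' <_l w`: at the smallest index at which `ℓ(w')` and `ℓ(w)` differ,
the entry of `ℓ(w')` is strictly greater than that of `ℓ(w)`. -/
def lexLt (w' w : Word N) : Prop :=
  ∃ k : Fin N, (∀ j : Fin N, j < k → cnt w' j = cnt w j) ∧ cnt w k < cnt w' k

/-- `w' ≤_l w`. -/
def lexLe (w' w : Word N) : Prop := (∀ k : Fin N, cnt w' k = cnt w k) ∨ lexLt w' w

/-- The homogeneous component `T^n` of the tensor algebra. -/
def Tdeg (N n : ℕ) : Submodule ℂ (T N) :=
  Submodule.span ℂ {x : T N | ∃ w : Word N, wlen w = n ∧ x = mono w}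

variable (b : Fin N → Fin N → ℂ) (p : Fin N → Fin N → T N)

/-- The scalars `b i j` (for `j < i`) are nonzero. -/
def GoodB : Prop := ∀ i j : Fin N, j < i → b i j ≠ 0

/-- Each `p i j` (for `j < i`) lies in the span of the monomials `X_k ⊗ X_l`
with `k, l ≤ i - 1`. -/
def GoodP : Prop := ∀ i j : Fin N, j < i →
  p i j ∈ Submodule.span ℂ {x : T N | ∃ k l : Fin N, k < i ∧ l < i ∧ x = X k * X l}

/-- The generator `X_i ⊗ X_j − b_{ij} X_j ⊗ X_i − p_{ij}` of the ideal of relations. -/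
def relGen (i j : Fin N) : T N := X i * X j - b i j • (X j * X i) - p i j

/-- The two-sided ideal `I_R` of relations (as a `ℂ`-submodule it is the span of the
elements `a ⬝ relGen i j ⬝ c`). -/
def IR : Submodule ℂ (T N) :=
  Submodule.span ℂ
    {x : T N | ∃ (i j : Fin N) (a c : T N), j < i ∧ x = a * relGen b p i j * c}

/-- Condition (EA): every `u ∈ I_R` lies in the span of the elements
`a ⊗ (X_i ⊗ X_j − b_{ij} X_j ⊗ X_i − p_{ij}) ⊗ c`, where `j < i` and `a, c` are monomials
of `T` such that the monomial `a ⊗ X_i ⊗ X_j ⊗ c` is `≤_l` every monomial occurring in `u`. -/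
def EA : Prop :=
  ∀ u ∈ IR b p, u ∈ Submodule.span ℂ
    {x : T N | ∃ (i j : Fin N) (a c : Word N), j < i ∧
      x = mono a * relGen b p i j * mono c ∧
      ∀ w ∈ (MonoidAlgebra.coeff u : Word N →₀ ℂ).support,
        lexLe (a * (FreeMonoid.of i * FreeMonoid.of j) * c) w}

/-- The map `S : V ⊗ V → V ⊗ V` on pairs of basis vectors. -/
def Sact (x y : Fin N) : T N :=
  if y < x then b x y • (X y * X x) + p x y
  else if x < y then (b y x)⁻¹ • (X y * X x - p y x)
  else X x * X y

/-- The map `S̄ : V ⊗ V → V ⊗ V` on pairs of basis vectors. -/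
def SbarAct (x y : Fin N) : T N :=
  if y < x then b x y • (X y * X x)
  else if x < y then (b y x)⁻¹ • (X y * X x)
  else X x * X y

/-- Extend a function on words to a linear endomorphism of `T(V)`. -/
def liftWord (f : Word N → T N) : T N →ₗ[ℂ] T N :=
  Finsupp.lsum ℂ (fun w => LinearMap.toSpanSingleton ℂ (T N) (f w)) ∘ₗ
    (MonoidAlgebra.coeffLinearEquiv ℂ : T N ≃ₗ[ℂ] (Word N →₀ ℂ)).toLinearMap

/-- The action of the paper's `σ_{k+1}` (acting on the tensor factors in 0-indexed
positions `k, k+1`) on a word; identity on words that are too short. -/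
def sigmaWord (k : ℕ) (w : Word N) : T N :=
  if h : k + 2 ≤ (FreeMonoid.toList w).length then
    mono (FreeMonoid.ofList ((FreeMonoid.toList w).take k)) *
      Sact b p ((FreeMonoid.toList w).get ⟨k, by omega⟩)
        ((FreeMonoid.toList w).get ⟨k + 1, by omega⟩) *
      mono (FreeMonoid.ofList ((FreeMonoid.toList w).drop (k + 2)))
  else mono w

/-- The paper's operator `σ_{k+1}`: it acts as `S` on the tensor factors in 0-indexed
positions `k, k+1` and as the identity on all other factors. -/
def sigma (k : ℕ) : T N →ₗ[ℂ] T N := liftWord (sigmaWord b p k)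

/-- The action of the paper's `σ̄_{k+1}` on a word. -/
def sigmabarWord (k : ℕ) (w : Word N) : T N :=
  if h : k + 2 ≤ (FreeMonoid.toList w).length then
    mono (FreeMonoid.ofList ((FreeMonoid.toList w).take k)) *
      SbarAct b ((FreeMonoid.toList w).get ⟨k, by omega⟩)
        ((FreeMonoid.toList w).get ⟨k + 1, by omega⟩) *
      mono (FreeMonoid.ofList ((FreeMonoid.toList w).drop (k + 2)))
  else mono w

/-- The paper's operator `σ̄_{k+1}`: it acts as `S̄` on the tensor factors in 0-indexed
positions `k, k+1` and as the identity on all other factors. -/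
def sigmabar (k : ℕ) : T N →ₗ[ℂ] T N := liftWord (sigmabarWord b k)

/-- The scalar by which `S̄` twists the (ordered) pair `(x, y)`. -/
def betaC (x y : Fin N) : ℂ := if y < x then b x y else if x < y then (b y x)⁻¹ else 1

/-- The coefficient of the quasi-permutation action of `σ ∈ S_n` on the word
`X_{f 0} ⊗ ⋯ ⊗ X_{f (n-1)}`: the product of `β` over the inversions of `σ`. -/
def permCoeff {n : ℕ} (σ : Equiv.Perm (Fin n)) (f : Fin n → Fin N) : ℂ :=
  ∏ q ∈ Finset.univ.filter (fun q : Fin n × Fin n => q.1 < q.2 ∧ σ q.2 < σ q.1),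
    betaC b (f q.1) (f q.2)

/-- The quasi-permutation action of `σ ∈ S_n` on a word
(identity on words of length `≠ n`). -/
def permWordFun {n : ℕ} (σ : Equiv.Perm (Fin n)) (w : Word N) : T N :=
  if h : (FreeMonoid.toList w).length = n then
    permCoeff b σ (fun j => (FreeMonoid.toList w).get (Fin.cast h.symm j)) •
      mono (FreeMonoid.ofList
        (List.ofFn fun j => (FreeMonoid.toList w).get (Fin.cast h.symm (σ⁻¹ j))))
  else mono w

/-- The operator `σ̄` on `T^n` for an arbitrary permutation `σ ∈ S_n`
(the quasi-permutation representation). -/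
def sigmabarPerm {n : ℕ} (σ : Equiv.Perm (Fin n)) : T N →ₗ[ℂ] T N :=
  liftWord (permWordFun b σ)

/-- The quasi-symmetrization operator `P_quasisym = (1/n!) ∑_{σ ∈ S_n} σ̄` on `T^n`. -/
def Pquasisym (n : ℕ) : T N →ₗ[ℂ] T N :=
  (n.factorial : ℂ)⁻¹ • ∑ σ : Equiv.Perm (Fin n), sigmabarPerm b σ

/-- The adjacent transposition `s_{k+1} = (k, k+1)` (0-indexed) in `S_n`. -/
def swapAdj (n : ℕ) (k : {k : ℕ // k + 2 ≤ n}) : Equiv.Perm (Fin n) :=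
  Equiv.swap ⟨k.1, by omega⟩ ⟨k.1 + 1, by omega⟩

/-- A choice, for each `σ ∈ S_n`, of a list of adjacent transpositions. -/
def DecompChoice (n : ℕ) := Equiv.Perm (Fin n) → List {k : ℕ // k + 2 ≤ n}

/-- The chosen lists really are decompositions: `σ = s_{i_1} ⋯ s_{i_r}`. -/
def ValidDecomp {n : ℕ} (D : DecompChoice n) : Prop :=
  ∀ σ : Equiv.Perm (Fin n), ((D σ).map (swapAdj n)).prod = σ

/-- `σ̂ = σ_{i_1} ⋯ σ_{i_r}` for the chosen decomposition `σ = s_{i_1} ⋯ s_{i_r}`. -/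
def Phat {n : ℕ} (D : DecompChoice n) (σ : Equiv.Perm (Fin n)) : Module.End ℂ (T N) :=
  ((D σ).map (fun k => (sigma b p k.1 : Module.End ℂ (T N)))).prod

/-- `P = (1/n!) ∑_{σ ∈ S_n} σ̂` (depending on the chosen decompositions `D`). -/
def POp {n : ℕ} (D : DecompChoice n) : Module.End ℂ (T N) :=
  (n.factorial : ℂ)⁻¹ • ∑ σ : Equiv.Perm (Fin n), Phat b p D σ

/-- `Q` is the operator `𝒫_qsym = lim_{M → ∞} P^M`: on each `T^n` and for every choice
of decompositions, the sequence `P^M u` is eventually equal to `Q u`. -/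
def IsPqsym (Q : T N →ₗ[ℂ] T N) : Prop :=
  ∀ (n : ℕ) (D : DecompChoice n), ValidDecomp D →
    ∀ u ∈ Tdeg N n, ∃ N₀ : ℕ, ∀ M ≥ N₀, ((POp b p D) ^ M) u = Q u

/-- The operator `I_r ⊗ Q^k ⊗ I_s` on `T^{r+k+s}`: on a word, apply `Q` to the middle
`k` tensor factors and the identity to the outer factors. -/
def middleMap (Q : T N →ₗ[ℂ] T N) (r k : ℕ) : T N →ₗ[ℂ] T N :=
  liftWord (fun w =>
    mono (FreeMonoid.ofList ((FreeMonoid.toList w).take r)) *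
      Q (mono (FreeMonoid.ofList (((FreeMonoid.toList w).drop r).take k))) *
      mono (FreeMonoid.ofList ((FreeMonoid.toList w).drop (r + k))))

/-- The pairing between `T(V^*)` (realized via the dual basis, hence again as the span
of words) and `T(V)`: a dual-basis word pairs to `1` with the corresponding word of the
same degree, and to `0` with all other words. -/
def pairT (w z : T N) : ℂ :=
  Finsupp.sum (MonoidAlgebra.coeff w : Word N →₀ ℂ) (fun a c => c * (MonoidAlgebra.coeff z : Word N →₀ ℂ) a)

/-- The quotient relation defining the quadratic algebra `𝒜 = T/I_R = RingQuot (Rel b p)`. -/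
inductive Rel (b : Fin N → Fin N → ℂ) (p : Fin N → Fin N → T N) : T N → T N → Prop
  | mk (i j : Fin N) (h : j < i) : Rel b p (X i * X j) (b i j • (X j * X i) + p i j)

/-- The ordered monomial `X_1^{a_1} ⊗ X_2^{a_2} ⊗ ⋯ ⊗ X_N^{a_N}`. -/
def ordMono (a : Fin N → ℕ) : T N := ((List.finRange N).map (fun i => X i ^ a i)).prod

/-!
Every `σ_t` is absorbed by `𝒫_qsym`. Indeed, appending `s_t` to the chosen decomposition of
`σ s_t⁻¹` is another admissible choice of decompositions, and its averaging operator is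
`P' = P σ_t`. Since `𝒫_qsym` is the eventual value of the powers of every such operator, it
absorbs both `P` and `P'`, so `𝒫_qsym σ_t = 𝒫_qsym P σ_t = 𝒫_qsym P' = 𝒫_qsym`.

On a word `a m c` with `|a| = r` and `|m| = k`, the middle factor `𝒫_qsym (m)` equals
`P_k^M (m)` for large `M`, and `I_r ⊗ P_k^M ⊗ I_s` is a weighted average (weights summing to
`1`) of products of the shifted operators `σ_{r+j}`, each of which `𝒫_qsym` absorbs.
-/

lemma mono_mul (a c : Word N) : (mono a : T N) * mono c = mono (a * c) := by
  simp [mono, MonoidAlgebra.single_mul_single]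

lemma X_eq_mono (i : Fin N) : X i = mono (FreeMonoid.of i) := rfl

lemma wlen_mul (v w : Word N) : wlen (v * w) = wlen v + wlen w := by
  simp [wlen]

lemma liftWord_mono (f : Word N → T N) (w : Word N) : liftWord f (mono w) = f w := by
  simp [liftWord, mono]

lemma linearMap_ext_mono {f g : T N →ₗ[ℂ] T N} (h : ∀ w, f (mono w) = g (mono w)) : f = g :=
  MonoidAlgebra.lhom_ext' fun w => LinearMap.ext_ring (h w)

lemma exists_eq_mul_mul {w : Word N} {r k : ℕ} (h : r + k ≤ wlen w) :
    ∃ a m c : Word N, wlen a = r ∧ wlen m = k ∧ w = a * m * c := by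
  refine ⟨FreeMonoid.ofList ((FreeMonoid.toList w).take r),
    FreeMonoid.ofList (((FreeMonoid.toList w).drop r).take k),
    FreeMonoid.ofList ((FreeMonoid.toList w).drop (r + k)), ?_, ?_, ?_⟩
  · simp only [wlen] at h ⊢; simp; omega
  · simp only [wlen] at h ⊢; simp; omega
  · apply FreeMonoid.toList.injective
    simp [← List.drop_drop]

lemma middleMap_mono_mul_mul (Q : T N →ₗ[ℂ] T N) {a m : Word N} (c : Word N) :
    middleMap Q (wlen a) (wlen m) (mono (a * m * c)) = mono a * Q (mono m) * mono c := by
  rw [middleMap, liftWord_mono]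
  simp only [wlen, FreeMonoid.toList_mul, List.append_assoc, List.take_left, List.drop_left,
    List.drop_length_add_append, FreeMonoid.ofList_toList]

lemma mono_mem_Tdeg (w : Word N) : (mono w : T N) ∈ Tdeg N (wlen w) :=
  Submodule.subset_span ⟨w, rfl, rfl⟩

lemma Tdeg_mul_le (m n : ℕ) : Tdeg N m * Tdeg N n ≤ Tdeg N (m + n) := by
  rw [Tdeg, Tdeg, Submodule.span_mul_span, Submodule.span_le]
  rintro _ ⟨_, ⟨v, rfl, rfl⟩, _, ⟨w, rfl, rfl⟩, rfl⟩
  show mono v * mono w ∈ Tdeg N _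
  rw [mono_mul, ← wlen_mul]
  exact mono_mem_Tdeg _

lemma mul_mem_Tdeg {m n : ℕ} {x y : T N} (hx : x ∈ Tdeg N m) (hy : y ∈ Tdeg N n) :
    x * y ∈ Tdeg N (m + n) :=
  Tdeg_mul_le m n (Submodule.mul_mem_mul hx hy)

lemma X_mul_X_mem_Tdeg (i j : Fin N) : X i * X j ∈ Tdeg N 2 := by
  rw [X_eq_mono, X_eq_mono, mono_mul]
  simpa [wlen] using mono_mem_Tdeg (FreeMonoid.of i * FreeMonoid.of j)

section Degree

variable {p}

lemma Sact_mem_Tdeg (hp : GoodP p) (x y : Fin N) : Sact b p x y ∈ Tdeg N 2 := by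
  have hp2 {i j : Fin N} (h : j < i) : p i j ∈ Tdeg N 2 := by
    refine Submodule.span_le.2 ?_ (hp i j h)
    rintro _ ⟨k, l, -, -, rfl⟩
    exact X_mul_X_mem_Tdeg k l
  unfold Sact
  split_ifs with h1 h2
  · exact add_mem (Submodule.smul_mem _ _ (X_mul_X_mem_Tdeg y x)) (hp2 h1)
  · exact Submodule.smul_mem _ _ (sub_mem (X_mul_X_mem_Tdeg y x) (hp2 h2))
  · exact X_mul_X_mem_Tdeg x y

lemma sigma_mem_Tdeg (hp : GoodP p) (j : ℕ) {n : ℕ} {u : T N} (hu : u ∈ Tdeg N n) :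
    sigma b p j u ∈ Tdeg N n := by
  refine (Submodule.span_le (p := (Tdeg N n).comap (sigma b p j))).2 ?_ hu
  rintro _ ⟨w, rfl, rfl⟩
  simp only [SetLike.mem_coe, Submodule.mem_comap, sigma, liftWord_mono, sigmaWord]
  split_ifs with h
  · have hlen : wlen (FreeMonoid.ofList ((FreeMonoid.toList w).take j)) + 2 +
        wlen (FreeMonoid.ofList ((FreeMonoid.toList w).drop (j + 2))) = wlen w := by
      simp only [wlen, FreeMonoid.toList_ofList, List.length_take, List.length_drop]
      omega
    exact hlen ▸ mul_mem_Tdeg (mul_mem_Tdeg (mono_mem_Tdeg _) (Sact_mem_Tdeg b hp _ _))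
      (mono_mem_Tdeg _)
  · exact mono_mem_Tdeg w

lemma Phat_mem_Tdeg (hp : GoodP p) {n : ℕ} (D : DecompChoice n) (σ : Equiv.Perm (Fin n))
    {m : ℕ} {u : T N} (hu : u ∈ Tdeg N m) : Phat b p D σ u ∈ Tdeg N m := by
  unfold Phat
  induction D σ with
  | nil => exact hu
  | cons t l ih =>
    rw [List.map_cons, List.prod_cons, Module.End.mul_apply]
    exact sigma_mem_Tdeg b hp t.1 ih

lemma POp_mem_Tdeg (hp : GoodP p) {n : ℕ} (D : DecompChoice n) {m : ℕ} {u : T N}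
    (hu : u ∈ Tdeg N m) : POp b p D u ∈ Tdeg N m := by
  simp only [POp, LinearMap.smul_apply, LinearMap.sum_apply]
  exact Submodule.smul_mem _ _ (Submodule.sum_mem _ fun σ _ => Phat_mem_Tdeg b hp D σ hu)

end Degree

lemma sigmaWord_mul_left (a m : Word N) (j : ℕ) :
    sigmaWord b p (wlen a + j) (a * m) = mono a * sigmaWord b p j m := by
  unfold sigmaWord wlen
  by_cases h : j + 2 ≤ (FreeMonoid.toList m).length
  · rw [dif_pos h, dif_pos (by simp; omega)]
    simp only [FreeMonoid.toList_mul, List.take_length_add_append, add_assoc,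
      List.drop_length_add_append, List.get_eq_getElem]
    simp [← mono_mul, mul_assoc]
  · rw [dif_neg h, dif_neg (by simp; omega), mono_mul]

lemma sigmaWord_mul_right {m : Word N} {j : ℕ} (h : j + 2 ≤ wlen m) (c : Word N) :
    sigmaWord b p j (m * c) = sigmaWord b p j m * mono c := by
  unfold sigmaWord wlen at *
  rw [dif_pos h, dif_pos (by simp; omega)]
  have h0 : j < (FreeMonoid.toList m).length := by omega
  have h1 : j + 1 < (FreeMonoid.toList m).length := by omega
  simp only [FreeMonoid.toList_mul, List.get_eq_getElem, List.take_append_of_le_length h0.le,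
    List.getElem_append_left h0, List.getElem_append_left h1, List.drop_append_of_le_length h]
  simp [← mono_mul, mul_assoc]

lemma sigma_mono_mul (a : Word N) (j : ℕ) (x : T N) :
    sigma b p (wlen a + j) (mono a * x) = mono a * sigma b p j x := by
  refine LinearMap.congr_fun (f := sigma b p (wlen a + j) ∘ₗ LinearMap.mulLeft ℂ (mono a))
    (g := LinearMap.mulLeft ℂ (mono a) ∘ₗ sigma b p j) (linearMap_ext_mono fun m => ?_) x
  simp only [LinearMap.comp_apply, LinearMap.mulLeft_apply, mono_mul, sigma, liftWord_mono,
    sigmaWord_mul_left]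

lemma sigma_mul_mono {j k : ℕ} (hj : j + 2 ≤ k) {x : T N} (hx : x ∈ Tdeg N k) (c : Word N) :
    sigma b p j (x * mono c) = sigma b p j x * mono c := by
  refine (Submodule.span_le (p := LinearMap.eqLocus
    (sigma b p j ∘ₗ LinearMap.mulRight ℂ (mono c))
    (LinearMap.mulRight ℂ (mono c) ∘ₗ sigma b p j))).2 ?_ hx
  rintro _ ⟨m, rfl, rfl⟩
  simp only [SetLike.mem_coe, LinearMap.mem_eqLocus, LinearMap.comp_apply,
    LinearMap.mulRight_apply, mono_mul, sigma, liftWord_mono, sigmaWord_mul_right b p hj]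

lemma closure_range_swapAdj (n : ℕ) : Submonoid.closure (Set.range (swapAdj n)) = ⊤ := by
  cases n with
  | zero => exact Subsingleton.elim _ _
  | succ m =>
    refine top_unique ((Equiv.Perm.mclosure_swap_castSucc_succ m).ge.trans
      (Submonoid.closure_mono ?_))
    rintro _ ⟨i, rfl⟩
    exact ⟨⟨i, by omega⟩, rfl⟩

lemma exists_validDecomp (n : ℕ) : ∃ D : DecompChoice n, ValidDecomp D := by
  have (σ : Equiv.Perm (Fin n)) :
      ∃ l : List {k // k + 2 ≤ n}, (l.map (swapAdj n)).prod = σ := by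
    obtain ⟨w, hw⟩ : σ ∈ MonoidHom.mrange (FreeMonoid.lift (swapAdj n)) := by
      rw [FreeMonoid.mrange_lift, closure_range_swapAdj]
      trivial
    exact ⟨w.toList, by rwa [FreeMonoid.lift_apply] at hw⟩
  choose D hD using this
  exact ⟨D, hD⟩

lemma exists_POp_eq_POp_mul_sigma {n : ℕ} {D : DecompChoice n} (hD : ValidDecomp D)
    (t : {k : ℕ // k + 2 ≤ n}) :
    ∃ D' : DecompChoice n, ValidDecomp D' ∧ POp b p D' = POp b p D * sigma b p t.1 := by
  refine ⟨fun σ => D (σ * (swapAdj n t)⁻¹) ++ [t], fun σ => ?_, ?_⟩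
  · rw [List.map_append, List.prod_append, hD]
    simp
  · have hPhat (σ : Equiv.Perm (Fin n)) :
        Phat b p (fun σ => D (σ * (swapAdj n t)⁻¹) ++ [t]) σ =
          Phat b p D (σ * (swapAdj n t)⁻¹) * sigma b p t.1 := by
      simp [Phat, List.prod_append]
    simp only [POp]
    rw [Finset.sum_congr rfl fun σ _ => hPhat σ, ← Finset.sum_mul, smul_mul_assoc,
      Fintype.sum_equiv (Equiv.mulRight (swapAdj n t)⁻¹)
        (fun σ => Phat b p D (σ * (swapAdj n t)⁻¹)) (Phat b p D) fun _ => rfl]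

lemma _root_.Module.End.eq_of_eventually_pow_apply_eq {R M : Type*} [Semiring R]
    [AddCommMonoid M] [Module R M] {P : Module.End R M} {u y z : M}
    (hu : ∀ᶠ n in Filter.atTop, (P ^ n) u = y)
    (hPu : ∀ᶠ n in Filter.atTop, (P ^ n) (P u) = z) : z = y := by
  obtain ⟨n, hn, hn'⟩ := (hPu.and ((Filter.tendsto_add_atTop_nat 1).eventually hu)).exists
  rw [← hn, ← hn', pow_succ, Module.End.mul_apply]

/-- Operators `F` preserving `T^k` such that `I_r ⊗ F ⊗ I_s` is invisible to `Q` for all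
`r, s`. -/
def middleAbsorbed (Q : T N →ₗ[ℂ] T N) (k : ℕ) : Submonoid (Module.End ℂ (T N)) where
  carrier := {F | ∀ x ∈ Tdeg N k, F x ∈ Tdeg N k ∧
    ∀ a c : Word N, Q (mono a * F x * mono c) = Q (mono a * x * mono c)}
  one_mem' x hx := ⟨hx, fun _ _ => rfl⟩
  mul_mem' {F G} hF hG x hx := by
    obtain ⟨hGx, hQG⟩ := hG x hx
    obtain ⟨hFGx, hQF⟩ := hF (G x) hGx
    exact ⟨hFGx, fun a c => (hQF a c).trans (hQG a c)⟩

lemma sum_smul_mem_middleAbsorbed {Q : T N →ₗ[ℂ] T N} {k : ℕ} {ι : Type*} [Fintype ι]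
    {w : ι → ℂ} (hw : ∑ i, w i = 1) {F : ι → Module.End ℂ (T N)}
    (hF : ∀ i, F i ∈ middleAbsorbed Q k) : ∑ i, w i • F i ∈ middleAbsorbed Q k := by
  intro x hx
  refine ⟨?_, fun a c => ?_⟩
  · simp only [LinearMap.sum_apply, LinearMap.smul_apply]
    exact Submodule.sum_mem _ fun i _ => Submodule.smul_mem _ _ (hF i x hx).1
  · simp only [LinearMap.sum_apply, LinearMap.smul_apply, Finset.mul_sum, Finset.sum_mul,
      mul_smul_comm, smul_mul_assoc, map_sum, map_smul, fun i => (hF i x hx).2 a c,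
      ← Finset.sum_smul, hw, one_smul]

namespace IsPqsym

variable {b p} {Q : T N →ₗ[ℂ] T N}

lemma eventually_pow_apply (hQ : IsPqsym b p Q) {n : ℕ} {D : DecompChoice n}
    (hD : ValidDecomp D) {u : T N} (hu : u ∈ Tdeg N n) :
    ∀ᶠ M in Filter.atTop, (POp b p D ^ M) u = Q u :=
  Filter.eventually_atTop.2 (hQ n D hD u hu)

lemma apply_POp (hQ : IsPqsym b p Q) (hp : GoodP p) {n : ℕ} {D : DecompChoice n}
    (hD : ValidDecomp D) {u : T N} (hu : u ∈ Tdeg N n) : Q (POp b p D u) = Q u :=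
  Module.End.eq_of_eventually_pow_apply_eq (hQ.eventually_pow_apply hD hu)
    (hQ.eventually_pow_apply hD (POp_mem_Tdeg b hp D hu))

lemma apply_sigma (hQ : IsPqsym b p Q) (hp : GoodP p) {n j : ℕ} (hj : j + 2 ≤ n) {u : T N}
    (hu : u ∈ Tdeg N n) : Q (sigma b p j u) = Q u := by
  obtain ⟨D, hD⟩ := exists_validDecomp n
  obtain ⟨D', hD', hPD'⟩ := exists_POp_eq_POp_mul_sigma b p hD ⟨j, hj⟩
  calc Q (sigma b p j u) = Q (POp b p D (sigma b p j u)) :=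
        (hQ.apply_POp hp hD (sigma_mem_Tdeg b hp j hu)).symm
    _ = Q (POp b p D' u) := by rw [hPD', Module.End.mul_apply]
    _ = Q u := hQ.apply_POp hp hD' hu

lemma sigma_mem_middleAbsorbed (hQ : IsPqsym b p Q) (hp : GoodP p) {j k : ℕ}
    (hj : j + 2 ≤ k) : sigma b p j ∈ middleAbsorbed Q k := by
  intro x hx
  refine ⟨sigma_mem_Tdeg b hp j hx, fun a c => ?_⟩
  have hmem : mono a * (x * mono c) ∈ Tdeg N (wlen a + (k + wlen c)) :=
    mul_mem_Tdeg (mono_mem_Tdeg a) (mul_mem_Tdeg hx (mono_mem_Tdeg c))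
  rw [mul_assoc, mul_assoc, ← sigma_mul_mono b p hj hx, ← sigma_mono_mul,
    hQ.apply_sigma hp (by omega) hmem]

lemma POp_mem_middleAbsorbed (hQ : IsPqsym b p Q) (hp : GoodP p) {k : ℕ}
    (D : DecompChoice k) : POp b p D ∈ middleAbsorbed Q k := by
  have hPhat (σ : Equiv.Perm (Fin k)) : Phat b p D σ ∈ middleAbsorbed Q k :=
    Submonoid.list_prod_mem _ fun F hF => by
      obtain ⟨t, -, rfl⟩ := List.mem_map.1 hF
      exact hQ.sigma_mem_middleAbsorbed hp t.2
  rw [POp, Finset.smul_sum]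
  refine sum_smul_mem_middleAbsorbed ?_ hPhat
  rw [Finset.sum_const, Finset.card_univ, Fintype.card_perm, Fintype.card_fin, nsmul_eq_mul,
    mul_inv_cancel₀ (by exact_mod_cast k.factorial_ne_zero)]

end IsPqsym

theorem statement18_general {N : ℕ} (b : Fin N → Fin N → ℂ) (p : Fin N → Fin N → T N)
    (hp : GoodP p) :
    ∀ Q : T N →ₗ[ℂ] T N, IsPqsym b p Q →
      ∀ (r k s : ℕ), ∀ u ∈ Tdeg N (r + k + s),
        Q (middleMap Q r k u) = Q u := by
  intro Q hQ r k s u hu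
  refine (Submodule.span_le (p := LinearMap.eqLocus (Q ∘ₗ middleMap Q r k) Q)).2 ?_ hu
  rintro _ ⟨w, hw, rfl⟩
  obtain ⟨a, m, c, rfl, rfl, rfl⟩ := exists_eq_mul_mul (show r + k ≤ wlen w by omega)
  obtain ⟨D, hD⟩ := exists_validDecomp (wlen m)
  obtain ⟨M, hQm⟩ := (hQ.eventually_pow_apply hD (mono_mem_Tdeg m)).exists
  have hPM := (pow_mem (hQ.POp_mem_middleAbsorbed hp D) M (mono m) (mono_mem_Tdeg m)).2 a c
  rw [SetLike.mem_coe, LinearMap.mem_eqLocus, LinearMap.comp_apply, middleMap_mono_mul_mul,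
    ← hQm, hPM, mono_mul, mono_mul]

/-- `⋆⋆`: under (EA),
`𝒫_qsym^{r+k+s} ∘ (I_r ⊗ 𝒫_qsym^k ⊗ I_s) = 𝒫_qsym^{r+k+s}` on `T^{r+k+s}`. -/
theorem statement18 {N : ℕ} (b : Fin N → Fin N → ℂ) (p : Fin N → Fin N → T N)
    (hb : GoodB b) (hp : GoodP p) (hEA : EA b p) :
    ∀ Q : T N →ₗ[ℂ] T N, IsPqsym b p Q →
      ∀ (r k s : ℕ), ∀ u ∈ Tdeg N (r + k + s),
        Q (middleMap Q r k u) = Q u :=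
  statement18_general b p hp

end QDiff
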